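/- arXiv:1103.3570 — 3 statements merged into one kernel-verified Lean document; each statement's English description precedes it below -/
import Mathlib

section
/- If k ≥ 2, then every randomly k-dimensional graph is 2-connected. -/
open SimpleGraph Finset

variable {V : Type*}

/-- A finite set `W` of vertices resolves `G` if distinct vertices have
distinct vectors of distances to the vertices of `W`. -/
def SimpleGraph.IsResolvingSet (G : SimpleGraph V) (W : Finset V) : Prop :=
  ∀ u v : V, (∀ w ∈ W, G.dist u w = G.dist v w) → u = v

/-- The metric dimension of `G`: the minimum cardinality of a resolving set. -/
noncomputable def SimpleGraph.metricDim (G : SimpleGraph V) [Fintype V] : ℕ :=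
  sInf {k | ∃ W : Finset V, W.card = k ∧ G.IsResolvingSet W}

/-- `G` is randomly `k`-dimensional: `G` is connected, has metric dimension `k`,
and every `k`-subset of vertices is a (minimum) resolving set, i.e. a basis. -/
def SimpleGraph.RandomlyKDim (G : SimpleGraph V) [Fintype V] (k : ℕ) : Prop :=
  G.Connected ∧ G.metricDim = k ∧ ∀ W : Finset V, W.card = k → G.IsResolvingSet W

/-- The resolving number of `G`: the minimum `k` such that every `k`-subset of
vertices is a resolving set. -/
noncomputable def SimpleGraph.resolvingNumber (G : SimpleGraph V) [Fintype V] : ℕ :=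
  sInf {k | ∀ W : Finset V, W.card = k → G.IsResolvingSet W}

/-!
Suppose `v` is a cut vertex. If a component `C` of `G - v` contains two vertices `x ≠ y` at the
same distance from `v`, then no vertex outside `C` resolves them, so fewer than `k` vertices lie
outside `C`. Some `(k-1)`-set `W ∌ v` containing all of them is not resolving; the pair it fails
to resolve lies in `C ∪ {v}`, hence is equidistant from `v` as well, and `W ∪ {v}` is a `k`-set
that does not resolve it.

Otherwise each component of `G - v` meets every sphere around `v` at most once. For two components
`A`, `B`, the level-one vertices of `A` and `B` are equidistant from `v` and from everything
outside `A ∪ B`, so fewer than `k - 1` vertices lie outside `A ∪ B ∪ {v}`. Together with the vertex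
of `A` farthest from `v`, which resolves `A ∪ B ∪ {v}`, they form a resolving set of size `< k`.
-/

namespace SimpleGraph

variable {G : SimpleGraph V}

def ReachableAvoiding (G : SimpleGraph V) (v x y : V) : Prop :=
  ∃ p : G.Walk x y, v ∉ p.support

namespace ReachableAvoiding

variable {v x y z : V}

lemma refl (hx : x ≠ v) : G.ReachableAvoiding v x x := ⟨Walk.nil, by simpa using hx.symm⟩

lemma symm (h : G.ReachableAvoiding v x y) : G.ReachableAvoiding v y x := by
  obtain ⟨p, hp⟩ := h
  exact ⟨p.reverse, by simpa using hp⟩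

lemma trans (h : G.ReachableAvoiding v x y) (h' : G.ReachableAvoiding v y z) :
    G.ReachableAvoiding v x z := by
  obtain ⟨p, hp⟩ := h
  obtain ⟨q, hq⟩ := h'
  exact ⟨p.append q, by simp [Walk.mem_support_append_iff, hp, hq]⟩

lemma ne_left (h : G.ReachableAvoiding v x y) : x ≠ v := by
  rintro rfl
  obtain ⟨p, hp⟩ := h
  exact hp p.start_mem_support

lemma ne_right (h : G.ReachableAvoiding v x y) : y ≠ v :=
  h.symm.ne_left

end ReachableAvoiding

lemma connected_induce_compl_singleton {u v : V} (hu : u ≠ v)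
    (h : ∀ a b, a ≠ v → b ≠ v → G.ReachableAvoiding v a b) :
    (G.induce ({v}ᶜ : Set V)).Connected := by
  have : Nonempty ({v}ᶜ : Set V) := ⟨⟨u, hu⟩⟩
  refine ⟨fun ⟨a, ha⟩ ⟨b, hb⟩ => ?_⟩
  obtain ⟨p, hp⟩ := h a b ha hb
  exact ⟨p.induce _ fun w hw (hwv : w = v) => hp (hwv ▸ hw)⟩

namespace Connected

variable {v x w : V}

lemma dist_eq_add_of_not_reachableAvoiding (hG : G.Connected)
    (h : ¬G.ReachableAvoiding v x w) : G.dist x w = G.dist x v + G.dist v w := by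
  classical
  obtain ⟨p, hp⟩ := hG.exists_walk_length_eq_dist x w
  have hv : v ∈ p.support := by
    by_contra hv
    exact h ⟨p, hv⟩
  have hlen := congrArg Walk.length (p.take_spec hv)
  rw [Walk.length_append] at hlen
  have := dist_le (p.takeUntil v hv)
  have := dist_le (p.dropUntil v hv)
  have := hG.dist_triangle (u := x) (v := v) (w := w)
  omega

lemma exists_reachableAvoiding_dist_eq (hG : G.Connected) {s : ℕ} (hs : 1 ≤ s)
    (hsx : s ≤ G.dist x v) :
    ∃ z, G.ReachableAvoiding v x z ∧ G.dist z v = s ∧ G.dist x z = G.dist x v - s := by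
  classical
  obtain ⟨p, hp⟩ := hG.exists_walk_length_eq_dist x v
  have hxz := dist_le (p.take (G.dist x v - s))
  have hzv := dist_le (p.drop (G.dist x v - s))
  rw [Walk.take_length] at hxz
  rw [Walk.drop_length] at hzv
  have := hG.dist_triangle (u := x) (v := p.getVert (G.dist x v - s)) (w := v)
  refine ⟨_, ⟨p.take (G.dist x v - s), fun hv => ?_⟩, by omega, by omega⟩
  have := dist_le ((p.take (G.dist x v - s)).takeUntil v hv)
  have := Walk.length_takeUntil_le_length _ hv
  rw [Walk.take_length] at this
  omega

lemma dist_eq_sub_of_reachableAvoiding (hG : G.Connected) {ℓ : V}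
    (hinj : ∀ y z, G.ReachableAvoiding v y z → G.dist y v = G.dist z v → y = z)
    (hx : G.ReachableAvoiding v ℓ x) (hle : G.dist x v ≤ G.dist ℓ v) :
    G.dist ℓ x = G.dist ℓ v - G.dist x v := by
  obtain ⟨z, hz, hzv, hℓz⟩ :=
    hG.exists_reachableAvoiding_dist_eq (hG.pos_dist_of_ne hx.ne_right) hle
  obtain rfl := hinj z x (hz.symm.trans hx) hzv
  exact hℓz

lemma eq_of_dist_eq_of_forall_dist_le (hG : G.Connected) {ℓ b p q : V}
    (hinj : ∀ y z, G.ReachableAvoiding v y z → G.dist y v = G.dist z v → y = z)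
    (hℓ : ∀ z, G.ReachableAvoiding v ℓ z → G.dist z v ≤ G.dist ℓ v)
    (hp : p = v ∨ G.ReachableAvoiding v ℓ p ∨ G.ReachableAvoiding v b p)
    (hq : q = v ∨ G.ReachableAvoiding v ℓ q ∨ G.ReachableAvoiding v b q)
    (hpq : G.dist p ℓ = G.dist q ℓ) : p = q := by
  have near : ∀ r, G.ReachableAvoiding v ℓ r →
      G.dist r ℓ + G.dist r v = G.dist ℓ v ∧ 0 < G.dist r v := fun r hr => by
    have := hG.dist_eq_sub_of_reachableAvoiding hinj hr (hℓ r hr)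
    have := hℓ r hr
    exact ⟨by rw [dist_comm]; omega, hG.pos_dist_of_ne hr.ne_right⟩
  have far : ∀ r, ¬G.ReachableAvoiding v ℓ r → G.dist r ℓ = G.dist r v + G.dist ℓ v :=
    fun r hr => by
      rw [hG.dist_eq_add_of_not_reachableAvoiding fun h => hr h.symm, dist_comm (u := v)]
  by_cases hpℓ : G.ReachableAvoiding v ℓ p <;> by_cases hqℓ : G.ReachableAvoiding v ℓ q
  · have := near p hpℓ
    have := near q hqℓ
    exact hinj p q (hpℓ.symm.trans hqℓ) (by omega)
  · have := near p hpℓ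
    have := far q hqℓ
    omega
  · have := far p hpℓ
    have := near q hqℓ
    omega
  have hpqv : G.dist p v = G.dist q v := by
    have := far p hpℓ
    have := far q hqℓ
    omega
  rcases hp.imp_right (·.resolve_left hpℓ) with rfl | hbp <;>
    rcases hq.imp_right (·.resolve_left hqℓ) with rfl | hbq
  · rfl
  · exact (hG.dist_eq_zero_iff.mp (hpqv.symm.trans G.dist_self)).symm
  · exact hG.dist_eq_zero_iff.mp (hpqv.trans G.dist_self)
  · exact hinj p q (hbp.symm.trans hbq) hpqv

end Connected

variable {W : Finset V} {p q : V}

lemma Connected.notMem_of_forall_dist_eq (hG : G.Connected) (hpq : p ≠ q)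
    (h : ∀ w ∈ W, G.dist p w = G.dist q w) : p ∉ W := fun hp =>
  hpq (hG.dist_eq_zero_iff.mp ((h p hp).symm.trans G.dist_self)).symm

lemma Connected.isResolvingSet_of_forall_notMem (hG : G.Connected)
    (h : ∀ p q, p ∉ W → q ∉ W → (∀ w ∈ W, G.dist p w = G.dist q w) → p = q) :
    G.IsResolvingSet W := fun p q hpq => by_contra fun hne => hne <|
  h p q (hG.notMem_of_forall_dist_eq hne hpq)
    (hG.notMem_of_forall_dist_eq (Ne.symm hne) fun w hw => (hpq w hw).symm) hpq

variable [Fintype V] {k : ℕ}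

lemma IsResolvingSet.metricDim_le (hW : G.IsResolvingSet W) : G.metricDim ≤ W.card :=
  Nat.sInf_le ⟨W, rfl, hW⟩

lemma Connected.metricDim_lt_card (hG : G.Connected) : G.metricDim < Fintype.card V := by
  classical
  obtain ⟨u⟩ := hG.nonempty
  have hres : G.IsResolvingSet (univ.erase u) :=
    hG.isResolvingSet_of_forall_notMem fun p q hp hq _ => by
      simp only [mem_erase, mem_univ, and_true, not_not] at hp hq
      rw [hp, hq]
  have := hres.metricDim_le
  rw [card_erase_of_mem (mem_univ u), card_univ] at this
  have := Fintype.card_pos_iff.mpr hG.nonempty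
  omega

namespace RandomlyKDim

lemma card_lt (hG : G.RandomlyKDim k) (hpq : p ≠ q) {S : Finset V}
    (hS : ∀ w ∈ S, G.dist p w = G.dist q w) : S.card < k := by
  by_contra! hkS
  obtain ⟨W, hWS, hW⟩ := exists_subset_card_eq hkS
  exact hpq (hG.2.2 W hW p q fun w hw => hS w (hWS hw))

lemma exists_ne_forall_dist_eq (hG : G.RandomlyKDim k) (hW : W.card < k) :
    ∃ p q, p ≠ q ∧ ∀ w ∈ W, G.dist p w = G.dist q w := by
  by_contra! h
  have hres : G.IsResolvingSet W := fun p q hpq => by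
    by_contra hne
    obtain ⟨w, hw, hne'⟩ := h p q hne
    exact hne' (hpq w hw)
  have := hres.metricDim_le
  rw [hG.2.1] at this
  omega

variable {v x y : V}

lemma reachableAvoiding_of_dist_eq (hG : G.RandomlyKDim k) (hxy : x ≠ y)
    (hr : G.ReachableAvoiding v x y) (hd : G.dist x v = G.dist y v) {w : V} (hw : w ≠ v) :
    G.ReachableAvoiding v x w := by
  classical
  by_contra hxw
  have hconn := hG.1
  set T := univ.filter fun u => u ≠ v ∧ ¬G.ReachableAvoiding v x u
  have hwT : w ∈ T := by simp [T, hw, hxw]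
  have hT : T.card < k := hG.card_lt hxy fun u hu => by
    obtain ⟨-, -, hxu⟩ := mem_filter.mp hu
    have hyu : ¬G.ReachableAvoiding v y u := fun h => hxu (hr.trans h)
    rw [hconn.dist_eq_add_of_not_reachableAvoiding hxu,
      hconn.dist_eq_add_of_not_reachableAvoiding hyu, hd]
  have hTv : T ⊆ univ.erase v := fun u hu => by simpa using (mem_filter.mp hu).2.1
  have hcard := hG.2.1 ▸ hconn.metricDim_lt_card
  obtain ⟨W, hTW, hWv, hW⟩ := exists_subsuperset_card_eq hTv (n := k - 1) (by omega)
    (by rw [card_erase_of_mem (mem_univ v), card_univ]; omega)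
  have hpos := card_pos.mpr ⟨w, hwT⟩
  obtain ⟨p, q, hpq, hpqW⟩ := hG.exists_ne_forall_dist_eq (W := W) (by omega)
  -- the unresolved pair lies in the side of `x` or at `v`, so is separated from `w` by `v`
  have hside : ∀ r ∉ W, ¬G.ReachableAvoiding v r w := fun r hrW hrw =>
    hrW (hTW (mem_filter.mpr ⟨mem_univ r, hrw.ne_left, fun hxr => hxw (hxr.trans hrw)⟩))
  have hpv : G.dist p v = G.dist q v := by
    have := hpqW w (hTW hwT)
    rw [hconn.dist_eq_add_of_not_reachableAvoiding (hside p (hconn.notMem_of_forall_dist_eq hpq hpqW)),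
      hconn.dist_eq_add_of_not_reachableAvoiding (hside q (hconn.notMem_of_forall_dist_eq hpq.symm
        fun u hu => (hpqW u hu).symm))] at this
    omega
  have := hG.card_lt hpq (S := insert v W) (by
    simpa only [forall_mem_insert] using ⟨hpv, hpqW⟩)
  rw [card_insert_of_notMem fun hv => by simpa using hWv hv] at this
  omega

lemma exists_ne_reachableAvoiding_dist_eq (hG : G.RandomlyKDim k) {a b : V} (ha : a ≠ v)
    (hb : b ≠ v) (hab : ¬G.ReachableAvoiding v a b) :
    ∃ x y, x ≠ y ∧ G.ReachableAvoiding v x y ∧ G.dist x v = G.dist y v := by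
  classical
  by_contra hno
  have hinj : ∀ y z, G.ReachableAvoiding v y z → G.dist y v = G.dist z v → y = z :=
    fun y z hr hd => by_contra fun hne => hno ⟨y, z, hne, hr, hd⟩
  have hconn := hG.1
  obtain ⟨a₁, ha₁, ha₁v, -⟩ :=
    hconn.exists_reachableAvoiding_dist_eq le_rfl (hconn.pos_dist_of_ne ha)
  obtain ⟨b₁, hb₁, hb₁v, -⟩ :=
    hconn.exists_reachableAvoiding_dist_eq le_rfl (hconn.pos_dist_of_ne hb)
  set O := univ.filter fun w => w ≠ v ∧ ¬G.ReachableAvoiding v a w ∧ ¬G.ReachableAvoiding v b w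
  have hO : (insert v O).card < k := by
    refine hG.card_lt (p := a₁) (q := b₁) (fun h => hab (ha₁.trans (h ▸ hb₁.symm))) ?_
    refine forall_mem_insert _ _ _ |>.mpr ⟨by rw [ha₁v, hb₁v], fun w hw => ?_⟩
    obtain ⟨-, haw, hbw⟩ := (mem_filter.mp hw).2
    rw [hconn.dist_eq_add_of_not_reachableAvoiding fun h => haw (ha₁.trans h),
      hconn.dist_eq_add_of_not_reachableAvoiding fun h => hbw (hb₁.trans h), ha₁v, hb₁v]
  obtain ⟨ℓ, hℓ, hℓmax⟩ := exists_max_image (univ.filter (G.ReachableAvoiding v a))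
    (G.dist · v) ⟨a, mem_filter.mpr ⟨mem_univ a, ReachableAvoiding.refl ha⟩⟩
  have haℓ : G.ReachableAvoiding v a ℓ := (mem_filter.mp hℓ).2
  have side : ∀ r ∉ insert ℓ O,
      r = v ∨ G.ReachableAvoiding v ℓ r ∨ G.ReachableAvoiding v b r := fun r hr => by
    by_contra! h
    exact hr (mem_insert_of_mem (mem_filter.mpr
      ⟨mem_univ r, h.1, fun har => h.2.1 (haℓ.symm.trans har), h.2.2⟩))
  have hres : G.IsResolvingSet (insert ℓ O) :=
    hconn.isResolvingSet_of_forall_notMem fun p q hp hq hpq =>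
      hconn.eq_of_dist_eq_of_forall_dist_le hinj
        (fun z hz => hℓmax z (mem_filter.mpr ⟨mem_univ z, haℓ.trans hz⟩))
        (side p hp) (side q hq) (hpq ℓ (mem_insert_self ℓ O))
  have := hres.metricDim_le
  have := card_insert_le ℓ O
  rw [card_insert_of_notMem (by simp [O])] at hO
  have := hG.2.1
  omega

end RandomlyKDim

end SimpleGraph

theorem stmt4 [Fintype V] (G : SimpleGraph V) (k : ℕ)
    (hk : 2 ≤ k) (hG : G.RandomlyKDim k) :
    3 ≤ Fintype.card V ∧ ∀ v : V, (G.induce ({v}ᶜ : Set V)).Connected := by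
  have hcard : k < Fintype.card V := hG.2.1 ▸ hG.1.metricDim_lt_card
  refine ⟨by omega, fun v => ?_⟩
  obtain ⟨u, hu⟩ := Fintype.exists_ne_of_one_lt_card (by omega) v
  refine connected_induce_compl_singleton hu fun a b ha hb => by_contra fun hab => ?_
  obtain ⟨x, y, hxy, hr, hd⟩ := hG.exists_ne_reachableAvoiding_dist_eq ha hb hab
  exact hab ((hG.reachableAvoiding_of_dist_eq hxy hr hd ha).symm.trans
    (hG.reachableAvoiding_of_dist_eq hxy hr hd hb))
end

section
/- If G is a randomly k-dimensional graph of order n, then k ≤ 3 or k ≥ n−1. -/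
/-!
If every `k`-set of vertices resolves `G` but no `(k-1)`-set does, then each `(k-1)`-set `W`
fails to separate some pair `u ≠ v`, i.e. lies inside the set of vertices equidistant from
`u` and `v`; that set has fewer than `k` elements, so it equals `W`. Hence every `(k-1)`-set
is the equidistant set of one of the `C(n, 2)` pairs, and `C(n, k-1) ≤ C(n, 2)`, which is
false for `4 ≤ k ≤ n - 2`.
-/

open SimpleGraph Finset

variable {V : Type*}

namespace Nat

theorem choose_le_choose_of_le_of_le_half {n a b : ℕ} (hab : a ≤ b) (hb : b ≤ n / 2) :
    n.choose a ≤ n.choose b := by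
  induction b, hab using Nat.le_induction with
  | base => rfl
  | succ b _ ih => exact (ih (by omega)).trans (choose_le_succ_of_lt_half_left (by omega))

theorem choose_two_lt_choose {n j : ℕ} (hj : 3 ≤ j) (hjn : j + 3 ≤ n) :
    n.choose 2 < n.choose j := by
  have h23 : n.choose 2 < n.choose 3 := by
    have h : n.choose 3 * 3 = n.choose 2 * (n - 2) := choose_succ_right_eq n 2
    have hpos : 0 < n.choose 2 := choose_pos (by omega)
    have hn : 4 ≤ n - 2 := by omega
    nlinarith
  wlog hhalf : j ≤ n / 2 generalizing j
  · rw [← choose_symm (by omega : j ≤ n)]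
    exact this (by omega) (by omega) (by omega)
  exact h23.trans_le (choose_le_choose_of_le_of_le_half hj hhalf)

end Nat

namespace SimpleGraph

variable [Fintype V] (G : SimpleGraph V)

noncomputable def equidistantSet (u v : V) : Finset V :=
  univ.filter fun w => G.dist u w = G.dist v w

theorem mem_equidistantSet {u v w : V} :
    w ∈ G.equidistantSet u v ↔ G.dist u w = G.dist v w := by
  simp [equidistantSet]

theorem equidistantSet_comm (u v : V) : G.equidistantSet u v = G.equidistantSet v u := by
  ext w
  simp only [mem_equidistantSet, eq_comm]

theorem not_isResolvingSet_iff {W : Finset V} :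
    ¬ G.IsResolvingSet W ↔ ∃ u v, u ≠ v ∧ W ⊆ G.equidistantSet u v := by
  simp only [IsResolvingSet, subset_iff, mem_equidistantSet, not_forall, exists_prop]
  exact exists₂_congr fun u v => and_comm

theorem metricDim_le_card {W : Finset V} (hW : G.IsResolvingSet W) : G.metricDim ≤ #W :=
  Nat.sInf_le ⟨W, rfl, hW⟩

theorem card_equidistantSet_lt {k : ℕ} (hres : ∀ W : Finset V, #W = k → G.IsResolvingSet W)
    {u v : V} (huv : u ≠ v) : #(G.equidistantSet u v) < k := by
  by_contra! hk
  obtain ⟨W, hWsub, hWcard⟩ := exists_subset_card_eq hk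
  exact (G.not_isResolvingSet_iff.mpr ⟨u, v, huv, hWsub⟩) (hres W hWcard)

noncomputable def equidistantSetSym2 : Sym2 V → Finset V :=
  Sym2.lift ⟨G.equidistantSet, G.equidistantSet_comm⟩

theorem powersetCard_subset_image_equidistantSetSym2 [DecidableEq V] {k : ℕ}
    (hres : ∀ W : Finset V, #W = k + 1 → G.IsResolvingSet W)
    (hnot : ∀ W : Finset V, #W = k → ¬ G.IsResolvingSet W) :
    univ.powersetCard k ⊆ (⊤ : SimpleGraph V).edgeFinset.image G.equidistantSetSym2 := by
  intro W hW
  rw [mem_powersetCard] at hW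
  obtain ⟨u, v, huv, hWsub⟩ := G.not_isResolvingSet_iff.mp (hnot W hW.2)
  have hcard := G.card_equidistantSet_lt hres huv
  exact mem_image.mpr ⟨s(u, v), by simpa using huv,
    (eq_of_subset_of_card_le hWsub (by omega)).symm⟩

end SimpleGraph

theorem stmt12 [Fintype V] (G : SimpleGraph V) (k : ℕ)
    (hG : G.RandomlyKDim k) :
    k ≤ 3 ∨ Fintype.card V - 1 ≤ k := by
  classical
  obtain ⟨-, hdim, hres⟩ := hG
  by_contra! hk
  obtain ⟨m, rfl⟩ : ∃ m, k = m + 1 := ⟨k - 1, by omega⟩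
  have hnot : ∀ W : Finset V, #W = m → ¬ G.IsResolvingSet W := fun W hW hWres => by
    have := G.metricDim_le_card hWres
    omega
  have hcard := card_le_card (G.powersetCard_subset_image_equidistantSetSym2 hres hnot)
  rw [card_powersetCard, card_univ] at hcard
  have := hcard.trans (card_image_le.trans_eq card_edgeFinset_top_eq_card_choose_two)
  exact (Nat.choose_two_lt_choose (by omega) (by omega)).not_ge this
end

section
/- If G is a connected graph with resolving number res(G) = 3, then Δ(G) ≤ 5. -/
/-!
Let `v` be a vertex with six neighbours `s`, and suppose every 3-set of vertices resolves `G`.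
Two distinct vertices cannot have three common neighbours, so every vertex of `s` is adjacent to
at most two others in `s`. For distinct `a, b ∈ s`, the four remaining vertices of `s` are at
distance 1 from `v`, and those adjacent to at most one of `a, b` have distances to `(a, b)` in
`{(1, 2), (2, 1), (2, 2)}`; since `{v, a, b}` resolves `G`, one of the four is adjacent to both.
So every `b ∈ s \ {a}` is a neighbour of one of the at most two neighbours of `a` in `s`, which
reach at most four vertices: too few for the five vertices of `s \ {a}`.
-/

open SimpleGraph Finset

variable {V : Type*}

namespace SimpleGraph

variable {G : SimpleGraph V}

/-- `sInf ∅ = 0`, so a positive resolving number is attained. -/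
theorem isResolvingSet_of_card_eq_resolvingNumber [Fintype V] (h : G.resolvingNumber ≠ 0)
    (W : Finset V) (hW : #W = G.resolvingNumber) : G.IsResolvingSet W :=
  Nat.sInf_mem (Nat.nonempty_of_pos_sInf (Nat.pos_of_ne_zero h)) W hW

theorem dist_eq_two_of_adj_of_adj {v x y : V} (hx : G.Adj v x) (hy : G.Adj v y) (hxy : x ≠ y)
    (hnadj : ¬G.Adj x y) : G.dist x y = 2 := by
  rw [dist, edist_eq_two_iff.mpr ⟨hxy, hnadj, v, G.mem_commonNeighbors.mpr ⟨hx.symm, hy.symm⟩⟩]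
  rfl

section ResolvingSubsets

variable {k : ℕ} (hk : ∀ W : Finset V, #W = k → G.IsResolvingSet W)
include hk

theorem card_lt_of_subset_commonNeighbors {x y : V} (hxy : x ≠ y) {W : Finset V}
    (hW : ↑W ⊆ G.commonNeighbors x y) : #W < k := by
  by_contra! hkW
  obtain ⟨U, hUW, hU⟩ := exists_subset_card_eq hkW
  refine hxy (hk U hU x y fun w hw ↦ ?_)
  obtain ⟨hxw, hyw⟩ := G.mem_commonNeighbors.mp (hW (hUW hw))
  rw [dist_eq_one_iff_adj.mpr hxw, dist_eq_one_iff_adj.mpr hyw]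

end ResolvingSubsets

section EveryThreeSetResolves

variable (h3 : ∀ W : Finset V, #W = 3 → G.IsResolvingSet W)
include h3

theorem card_filter_adj_le_two {v x : V} {s : Finset V} (hs : ∀ w ∈ s, G.Adj v w)
    (hx : G.Adj v x) [DecidablePred (G.Adj x)] : #{w ∈ s | G.Adj x w} ≤ 2 := by
  have := card_lt_of_subset_commonNeighbors h3 hx.ne' (W := {w ∈ s | G.Adj x w}) fun w hw ↦ by
    simp only [coe_filter, Set.mem_ofPred_eq] at hw
    exact G.mem_commonNeighbors.mpr ⟨hw.2, hs w hw.1⟩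
  omega

/-- The vertices of `t` are told apart by `{v, a, b}` only through their distances to `a` and
`b`, which take at most three values. -/
theorem card_le_three_of_not_adj_both {v a b : V} (ha : G.Adj v a) (hb : G.Adj v b) (hab : a ≠ b)
    {t : Finset V} (ht : ∀ x ∈ t, G.Adj v x ∧ x ≠ a ∧ x ≠ b ∧ ¬(G.Adj x a ∧ G.Adj x b)) :
    #t ≤ 3 := by
  classical
  let P : Finset (ℕ × ℕ) := {(1, 2), (2, 1), (2, 2)}
  have hdist : ∀ x ∈ t, (G.dist x a, G.dist x b) ∈ P := by
    intro x hx
    obtain ⟨hvx, hxa, hxb, hnot⟩ := ht x hx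
    by_cases hxa' : G.Adj x a <;> by_cases hxb' : G.Adj x b
    · exact absurd ⟨hxa', hxb'⟩ hnot
    · simp [P, dist_eq_one_iff_adj.mpr hxa', dist_eq_two_of_adj_of_adj hvx hb hxb hxb']
    · simp [P, dist_eq_one_iff_adj.mpr hxb', dist_eq_two_of_adj_of_adj hvx ha hxa hxa']
    · simp [P, dist_eq_two_of_adj_of_adj hvx ha hxa hxa',
        dist_eq_two_of_adj_of_adj hvx hb hxb hxb']
  have hW : #{v, a, b} = 3 := by
    rw [card_insert_of_notMem (by simp [ha.ne, hb.ne]), card_pair hab]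
  calc #t ≤ #P := card_le_card_of_injOn _ hdist fun x hx y hy hxy ↦ by
          obtain ⟨hxa, hxb⟩ := Prod.ext_iff.mp hxy
          refine h3 {v, a, b} hW x y ?_
          simp only [mem_insert, mem_singleton, forall_eq_or_imp, forall_eq]
          refine ⟨?_, hxa, hxb⟩
          rw [G.dist_comm, dist_eq_one_iff_adj.mpr (ht x hx).1, G.dist_comm,
            dist_eq_one_iff_adj.mpr (ht y hy).1]
    _ ≤ 3 := card_le_three

theorem exists_adj_adj_of_six_le_card {v a b : V} {s : Finset V} (hs : ∀ w ∈ s, G.Adj v w)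
    (hcard : 6 ≤ #s) (ha : a ∈ s) (hb : b ∈ s) (hab : a ≠ b) :
    ∃ x ∈ s, G.Adj x a ∧ G.Adj x b := by
  classical
  by_contra! hnone
  have ht := card_le_three_of_not_adj_both h3 (hs a ha) (hs b hb) hab
    (t := (s.erase a).erase b) fun x hx ↦ by
      obtain ⟨hxb, hxa, hxs⟩ := by simpa only [mem_erase] using hx
      exact ⟨hs x hxs, hxa, hxb, fun h ↦ hnone x hxs h.1 h.2⟩
  rw [card_erase_of_mem (mem_erase.mpr ⟨hab.symm, hb⟩), card_erase_of_mem ha] at ht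
  omega

theorem degree_le_five (v : V) [Fintype (G.neighborSet v)] : G.degree v ≤ 5 := by
  classical
  by_contra! hdeg
  obtain ⟨s, hsv, hcard⟩ := exists_subset_card_eq (s := G.neighborFinset v) hdeg
  have hs : ∀ w ∈ s, G.Adj v w := fun w hw ↦ (G.mem_neighborFinset v w).mp (hsv hw)
  obtain ⟨a, ha⟩ := card_pos.mp (by omega : 0 < #s)
  let nbrs : V → Finset V := fun x ↦ {w ∈ s | G.Adj x w}
  have hcover : s.erase a ⊆ (nbrs a).biUnion nbrs := by
    intro b hb
    obtain ⟨hba, hbs⟩ := mem_erase.mp hb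
    obtain ⟨x, hxs, hxa, hxb⟩ := exists_adj_adj_of_six_le_card h3 hs hcard.ge ha hbs hba.symm
    simp only [nbrs, mem_biUnion, mem_filter]
    exact ⟨x, ⟨hxs, hxa.symm⟩, hbs, hxb⟩
  have hnbrs : ∀ x ∈ s, #(nbrs x) ≤ 2 := fun x hx ↦ card_filter_adj_le_two h3 hs (hs x hx)
  have : 5 ≤ 4 := calc
    5 = #(s.erase a) := by rw [card_erase_of_mem ha, hcard]
    _ ≤ #((nbrs a).biUnion nbrs) := card_le_card hcover
    _ ≤ ∑ x ∈ nbrs a, #(nbrs x) := card_biUnion_le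
    _ ≤ #(nbrs a) * 2 := sum_le_card_nsmul _ _ _ fun x hx ↦ hnbrs x (mem_filter.mp hx).1
    _ ≤ 4 := by have := hnbrs a ha; omega
  omega

end EveryThreeSetResolves

end SimpleGraph

theorem stmt15_general [Fintype V] (G : SimpleGraph V) [DecidableRel G.Adj]
    (hres : G.resolvingNumber = 3) :
    G.maxDegree ≤ 5 := by
  have h3 (W : Finset V) (hW : #W = 3) : G.IsResolvingSet W :=
    isResolvingSet_of_card_eq_resolvingNumber (by omega) W (hW.trans hres.symm)
  exact G.maxDegree_le_of_forall_degree_le 5 fun v ↦ degree_le_five h3 v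

theorem stmt15 [Fintype V] (G : SimpleGraph V) [DecidableRel G.Adj]
    (hG : G.Connected) (hres : G.resolvingNumber = 3) :
    G.maxDegree ≤ 5 :=
  stmt15_general G hres
end
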